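/- Let x_i > 0, ẋ_i < 0, ẍ_i < 0, ρ = √(ẋ_i² + ẍ_i²), β = arcsin(−ẍ_i/ρ). If x_i + ẍ_i ≥ 0, then for all α ∈ [0, π/2], x_i − ẋ_i sin α + ẍ_i (1 − cos α) ≥ 0. If x_i + ẍ_i ≤ 0, then for all α ∈ [0, π − arcsin(−(x_i + ẍ_i)/ρ) − β] ∩ [0, π/2], x_i − ẋ_i sin α + ẍ_i (1 − cos α) ≥ 0. -/
import Mathlib

lemma sin_ge_of_between (γ θ : ℝ) (h0 : 0 ≤ γ) (hγ : γ ≤ Real.pi / 2)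
    (h1 : γ ≤ θ) (h2 : θ ≤ Real.pi - γ) : Real.sin γ ≤ Real.sin θ := by
  rcases le_or_gt θ (Real.pi / 2) with h | h
  · exact Real.strictMonoOn_sin.monotoneOn
      ⟨by linarith [Real.pi_pos], hγ⟩ ⟨by linarith [Real.pi_pos], h⟩ h1
  · rw [← Real.sin_pi_sub θ]
    exact Real.strictMonoOn_sin.monotoneOn
      ⟨by linarith [Real.pi_pos], hγ⟩ ⟨by linarith [Real.pi_pos], by linarith⟩
      (by linarith)

theorem step_size_case5 (xi xdi xddi : ℝ) (hx : 0 < xi)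
    (hxd : xdi < 0) (hxdd : xddi < 0)
    (ρ β : ℝ) (hρ : ρ = Real.sqrt (xdi ^ 2 + xddi ^ 2))
    (hβ : β = Real.arcsin (-xddi / ρ)) :
    (0 ≤ xi + xddi → ∀ α ∈ Set.Icc 0 (Real.pi / 2),
      xi - xdi * Real.sin α + xddi * (1 - Real.cos α) ≥ 0) ∧
    (xi + xddi ≤ 0 →
      ∀ α ∈ Set.Icc (0 : ℝ)
          (Real.pi - Real.arcsin (-(xi + xddi) / ρ) - β) ∩
        Set.Icc 0 (Real.pi / 2),
      xi - xdi * Real.sin α + xddi * (1 - Real.cos α) ≥ 0) := by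
  have hρpos : 0 < ρ := by
    rw [hρ]; exact Real.sqrt_pos.mpr (by nlinarith)
  have hρsq : ρ ^ 2 = xdi ^ 2 + xddi ^ 2 := by
    rw [hρ]; exact Real.sq_sqrt (by positivity)
  have hBle : -xddi ≤ ρ := by nlinarith
  have hAle : -xdi ≤ ρ := by nlinarith
  have hmem : -xddi / ρ ∈ Set.Icc (-1 : ℝ) 1 := by
    constructor
    · rw [le_div_iff₀ hρpos]; nlinarith
    · rw [div_le_one hρpos]; exact hBle
  have hsinβ : Real.sin β = -xddi / ρ := by
    rw [hβ]; exact Real.sin_arcsin hmem.1 hmem.2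
  have hcosβ : Real.cos β = -xdi / ρ := by
    rw [hβ, Real.cos_arcsin]
    rw [show 1 - (-xddi / ρ) ^ 2 = (-xdi / ρ) ^ 2 by field_simp; nlinarith]
    exact Real.sqrt_sq (div_nonneg (by linarith) hρpos.le)
  have key : ∀ α : ℝ, xi - xdi * Real.sin α + xddi * (1 - Real.cos α)
      = (xi + xddi) + ρ * Real.sin (α + β) := by
    intro α
    rw [Real.sin_add, hsinβ, hcosβ]
    field_simp
    ring
  constructor
  · intro h α hα
    have hs := Real.sin_nonneg_of_nonneg_of_le_pi hα.1
      (by linarith [hα.2, Real.pi_pos])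
    have hc := Real.cos_nonneg_of_mem_Icc
      ⟨by linarith [hα.1, Real.pi_pos], hα.2⟩
    nlinarith
  · intro h α ⟨hα1, hα2⟩
    set γ := Real.arcsin (-(xi + xddi) / ρ) with hγdef
    have hmem2 : -(xi + xddi) / ρ ∈ Set.Icc (0 : ℝ) 1 := by
      constructor
      · exact div_nonneg (by linarith) hρpos.le
      · rw [div_le_one hρpos]; nlinarith
    have hsinγ : Real.sin γ = -(xi + xddi) / ρ :=
      Real.sin_arcsin (by linarith [hmem2.1]) hmem2.2
    have hγ0 : 0 ≤ γ := Real.arcsin_nonneg.mpr hmem2.1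
    have hγle : γ ≤ Real.pi / 2 := Real.arcsin_le_pi_div_two _
    have hγβ : γ ≤ β := by
      rw [hγdef, hβ]
      exact Real.monotone_arcsin (by gcongr; linarith)
    have hsin : Real.sin γ ≤ Real.sin (α + β) := by
      apply sin_ge_of_between γ (α + β) hγ0 hγle
      · linarith [hα1.1]
      · linarith [hα1.2]
    rw [key α]
    have : ρ * Real.sin γ = -(xi + xddi) := by
      rw [hsinγ]; field_simp
    nlinarith
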